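/- arXiv:2105.02523 — 5 statements merged into one kernel-verified Lean document; each statement's English description precedes it below -/
import Mathlib

section
/- The functions a(y) = λ^{4/5}·6^{1/5}·y^{2/5} for 0 < y ≤ y_c and a(y) = (3λ²/2)^{1/3}·y^{2/3} for y > y_c, together with b(y) = 0 for y ≤ y_c and b(y) = (3/(16λ))^{2/3}·y^{4/3} − 1 for y > y_c, where y_c = 4·√(λ/3), are continuous on (0,∞) and continuously differentiable on (0,∞)\{y_c}, and for all y ≠ y_c they satisfy the system: −b(y) + (5/4)·y·b′(y) − a(y)·(b′(y))² + 𝟙_{y<y_c} = 1 and −(5/4)·y·a′(y) + (1/2)·a(y) − 2λ²·(b′(y))² + 2·a(y)·b′(y)·a′(y) = 0. -/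
open Real Set Filter Topology

/-!
On each side of `y_c` the profiles are power laws, so `y a' = p a` for the relevant exponent
`p`, and the substitution `y = s³` turns both equations into polynomial identities in `s`.
Left of `y_c` they hold for any coefficient of `y ^ (2/5)`; right of `y_c` they reduce to
`c₂ c₃ = 3/8` and `c₂³ = 3λ²/2` for the coefficients `c₂` of `a` and `c₃` of `b + 1`.
Since `y_c² = 16λ/3`, both branches of `a` take the value `2λ` at `y_c` and `b` vanishes there
from both sides, which gives continuity.
-/

lemma rpow_pow_of_mul_eq {x p : ℝ} (hx : 0 ≤ x) {n m : ℕ} (h : p * n = m) :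
    (x ^ p) ^ n = x ^ m := by
  rw [← rpow_mul_natCast hx, h, rpow_natCast]

lemma pow_rpow_of_mul_eq {x p : ℝ} (hx : 0 ≤ x) {n m : ℕ} (h : n * p = m) :
    (x ^ n) ^ p = x ^ m := by
  rw [← rpow_natCast_mul hx, h, rpow_natCast]

lemma hasDerivAt_const_mul_rpow (c p : ℝ) {y : ℝ} (hy : y ≠ 0) :
    HasDerivAt (fun t => c * t ^ p) (p * (c * y ^ p) / y) y := by
  refine ((hasDerivAt_rpow_const (p := p) (Or.inl hy)).const_mul c).congr_deriv ?_
  rw [rpow_sub_one hy]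
  ring

section Piecewise

variable {f g : ℝ → ℝ} {c y : ℝ}

lemma eventuallyEq_ite_le_of_lt (h : y < c) :
    (fun x => if x ≤ c then f x else g x) =ᶠ[𝓝 y] f :=
  eventually_of_mem (Iio_mem_nhds h) fun _ hx => if_pos (le_of_lt hx)

lemma eventuallyEq_ite_le_of_gt (h : c < y) :
    (fun x => if x ≤ c then f x else g x) =ᶠ[𝓝 y] g :=
  eventually_of_mem (Ioi_mem_nhds h) fun _ hx => if_neg (not_le.mpr hx)

lemma contDiffAt_ite_le {n : WithTop ℕ∞} (hy : y ≠ c) (hf : ContDiffAt ℝ n f y)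
    (hg : ContDiffAt ℝ n g y) : ContDiffAt ℝ n (fun x => if x ≤ c then f x else g x) y := by
  rcases hy.lt_or_gt with h | h
  · exact hf.congr_of_eventuallyEq (eventuallyEq_ite_le_of_lt h)
  · exact hg.congr_of_eventuallyEq (eventuallyEq_ite_le_of_gt h)

end Piecewise

namespace SortingFront

noncomputable def criticalPoint (lam : ℝ) : ℝ := 4 * √(lam / 3)

noncomputable def profileA (lam y : ℝ) : ℝ :=
  if y ≤ criticalPoint lam then lam ^ ((4:ℝ)/5) * (6:ℝ) ^ ((1:ℝ)/5) * y ^ ((2:ℝ)/5)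
  else (3 * lam ^ 2 / 2) ^ ((1:ℝ)/3) * y ^ ((2:ℝ)/3)

noncomputable def profileB (lam y : ℝ) : ℝ :=
  if y ≤ criticalPoint lam then 0 else (3 / (16 * lam)) ^ ((2:ℝ)/3) * y ^ ((4:ℝ)/3) - 1

def SolvesFrontSystemAt (lam yc : ℝ) (a b : ℝ → ℝ) (y : ℝ) : Prop :=
  (- b y + (5/4) * y * deriv b y - a y * (deriv b y) ^ 2
      + (if y < yc then (1:ℝ) else 0) = 1) ∧
  (- (5/4) * y * deriv a y + (1/2) * a y - 2 * lam ^ 2 * (deriv b y) ^ 2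
      + 2 * a y * deriv b y * deriv a y = 0)

variable {lam y : ℝ}

lemma criticalPoint_nonneg (lam : ℝ) : 0 ≤ criticalPoint lam := by
  unfold criticalPoint
  positivity

lemma criticalPoint_sq (hlam : 0 ≤ lam) : criticalPoint lam ^ 2 = 16 * lam / 3 := by
  rw [criticalPoint, mul_pow, sq_sqrt (by positivity)]
  ring

lemma leftCoeff_mul_criticalPoint_rpow (hlam : 0 < lam) :
    lam ^ ((4:ℝ)/5) * (6:ℝ) ^ ((1:ℝ)/5) * criticalPoint lam ^ ((2:ℝ)/5) = 2 * lam := by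
  have hyc := criticalPoint_nonneg lam
  refine (pow_left_inj₀ (by positivity) (by positivity) (by norm_num : 5 ≠ 0)).mp ?_
  rw [mul_pow, mul_pow, rpow_pow_of_mul_eq hlam.le (m := 4) (by norm_num),
    rpow_pow_of_mul_eq (by norm_num : (0:ℝ) ≤ 6) (m := 1) (by norm_num),
    rpow_pow_of_mul_eq hyc (m := 2) (by norm_num), criticalPoint_sq hlam.le]
  ring

lemma rightCoeff_mul_criticalPoint_rpow (hlam : 0 < lam) :
    (3 * lam ^ 2 / 2) ^ ((1:ℝ)/3) * criticalPoint lam ^ ((2:ℝ)/3) = 2 * lam := by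
  have hyc := criticalPoint_nonneg lam
  refine (pow_left_inj₀ (by positivity) (by positivity) three_ne_zero).mp ?_
  rw [mul_pow, rpow_pow_of_mul_eq (by positivity) (m := 1) (by norm_num),
    rpow_pow_of_mul_eq hyc (m := 2) (by norm_num), criticalPoint_sq hlam.le]
  ring

lemma bCoeff_mul_criticalPoint_rpow (hlam : 0 < lam) :
    (3 / (16 * lam)) ^ ((2:ℝ)/3) * criticalPoint lam ^ ((4:ℝ)/3) = 1 := by
  have hyc := criticalPoint_nonneg lam
  refine (pow_left_inj₀ (by positivity) zero_le_one three_ne_zero).mp ?_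
  rw [mul_pow, rpow_pow_of_mul_eq (by positivity) (m := 2) (by norm_num),
    rpow_pow_of_mul_eq hyc (m := 4) (by norm_num),
    show criticalPoint lam ^ 4 = (criticalPoint lam ^ 2) ^ 2 by ring, criticalPoint_sq hlam.le]
  field_simp

lemma rightCoeff_mul_bCoeff (hlam : 0 < lam) :
    (3 * lam ^ 2 / 2) ^ ((1:ℝ)/3) * (3 / (16 * lam)) ^ ((2:ℝ)/3) = 3 / 8 := by
  refine (pow_left_inj₀ (by positivity) (by positivity) three_ne_zero).mp ?_
  rw [mul_pow, rpow_pow_of_mul_eq (by positivity) (m := 1) (by norm_num),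
    rpow_pow_of_mul_eq (by positivity) (m := 2) (by norm_num)]
  field_simp
  ring

lemma continuous_profileA (hlam : 0 < lam) : Continuous (profileA lam) :=
  Continuous.if_le (continuous_const.mul (continuous_rpow_const (by norm_num)))
    (continuous_const.mul (continuous_rpow_const (by norm_num))) continuous_id continuous_const
    fun y (hy : y = _) => by
      rw [hy, leftCoeff_mul_criticalPoint_rpow hlam, rightCoeff_mul_criticalPoint_rpow hlam]

lemma continuous_profileB (hlam : 0 < lam) : Continuous (profileB lam) :=
  Continuous.if_le continuous_const
    ((continuous_const.mul (continuous_rpow_const (by norm_num))).sub continuous_const)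
    continuous_id continuous_const
    fun y (hy : y = _) => by rw [hy, bCoeff_mul_criticalPoint_rpow hlam, sub_self]

lemma contDiffAt_profileA {n : WithTop ℕ∞} (hy : y ≠ 0) (hyc : y ≠ criticalPoint lam) :
    ContDiffAt ℝ n (profileA lam) y :=
  contDiffAt_ite_le hyc (contDiffAt_const.mul (contDiffAt_rpow_const_of_ne hy))
    (contDiffAt_const.mul (contDiffAt_rpow_const_of_ne hy))

lemma contDiffAt_profileB {n : WithTop ℕ∞} (hy : y ≠ 0) (hyc : y ≠ criticalPoint lam) :
    ContDiffAt ℝ n (profileB lam) y :=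
  contDiffAt_ite_le hyc contDiffAt_const
    ((contDiffAt_const.mul (contDiffAt_rpow_const_of_ne hy)).sub contDiffAt_const)

lemma solvesFrontSystemAt_of_lt (hy : y ≠ 0) (h : y < criticalPoint lam) :
    SolvesFrontSystemAt lam (criticalPoint lam) (profileA lam) (profileB lam) y := by
  have hA : profileA lam =ᶠ[𝓝 y]
      fun t => lam ^ ((4:ℝ)/5) * (6:ℝ) ^ ((1:ℝ)/5) * t ^ ((2:ℝ)/5) :=
    eventuallyEq_ite_le_of_lt h
  have hB : profileB lam =ᶠ[𝓝 y] fun _ => 0 := eventuallyEq_ite_le_of_lt h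
  have hdA := (hasDerivAt_const_mul_rpow _ ((2:ℝ)/5) hy).congr_of_eventuallyEq hA
  rw [SolvesFrontSystemAt, hdA.deriv, hB.deriv_eq, deriv_const, hA.eq_of_nhds, hB.eq_of_nhds,
    if_pos h]
  constructor
  · ring
  · field_simp
    ring

lemma solvesFrontSystemAt_of_gt (hlam : 0 < lam) (h : criticalPoint lam < y) :
    SolvesFrontSystemAt lam (criticalPoint lam) (profileA lam) (profileB lam) y := by
  have hy : 0 < y := (criticalPoint_nonneg lam).trans_lt h
  set c₂ := (3 * lam ^ 2 / 2) ^ ((1:ℝ)/3) with hc₂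
  set c₃ := (3 / (16 * lam)) ^ ((2:ℝ)/3)
  have hA : profileA lam =ᶠ[𝓝 y] fun t => c₂ * t ^ ((2:ℝ)/3) := eventuallyEq_ite_le_of_gt h
  have hB : profileB lam =ᶠ[𝓝 y] fun t => c₃ * t ^ ((4:ℝ)/3) - 1 :=
    eventuallyEq_ite_le_of_gt h
  have hdA := (hasDerivAt_const_mul_rpow c₂ ((2:ℝ)/3) hy.ne').congr_of_eventuallyEq hA
  have hdB :=
    ((hasDerivAt_const_mul_rpow c₃ ((4:ℝ)/3) hy.ne').sub_const 1).congr_of_eventuallyEq hB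
  rw [SolvesFrontSystemAt, hdA.deriv, hdB.deriv, hA.eq_of_nhds, hB.eq_of_nhds,
    if_neg h.not_gt]
  have hc₂_pos : 0 < c₂ := by positivity
  have hc₃ : c₃ = 3 / (8 * c₂) := by
    rw [eq_div_iff (by positivity)]
    linear_combination 8 * rightCoeff_mul_bCoeff hlam
  have hlam_sq : lam ^ 2 = 2 / 3 * c₂ ^ 3 := by
    rw [hc₂, rpow_pow_of_mul_eq (by positivity) (m := 1) (by norm_num)]
    ring
  obtain ⟨s, hs, rfl⟩ : ∃ s, 0 < s ∧ s ^ 3 = y :=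
    ⟨y ^ ((1:ℝ)/3), by positivity,
      by rw [rpow_pow_of_mul_eq hy.le (m := 1) (by norm_num), pow_one]⟩
  rw [pow_rpow_of_mul_eq hs.le (p := 2/3) (m := 2) (by norm_num),
    pow_rpow_of_mul_eq hs.le (p := 4/3) (m := 4) (by norm_num), hc₃, hlam_sq]
  constructor
  · field_simp
    ring
  · field_simp
    ring

end SortingFront

theorem stmt_0 (lam : ℝ) (hlam : 0 < lam)
    (yc : ℝ) (hyc : yc = 4 * Real.sqrt (lam / 3))
    (a b : ℝ → ℝ)
    (ha : ∀ y : ℝ, a y = if y ≤ yc then lam ^ ((4:ℝ)/5) * (6:ℝ) ^ ((1:ℝ)/5) * y ^ ((2:ℝ)/5)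
        else (3 * lam ^ 2 / 2) ^ ((1:ℝ)/3) * y ^ ((2:ℝ)/3))
    (hb : ∀ y : ℝ, b y = if y ≤ yc then 0
        else (3 / (16 * lam)) ^ ((2:ℝ)/3) * y ^ ((4:ℝ)/3) - 1) :
    ContinuousOn a (Set.Ioi 0) ∧ ContinuousOn b (Set.Ioi 0) ∧
    ContDiffOn ℝ 1 a (Set.Ioi 0 \ {yc}) ∧ ContDiffOn ℝ 1 b (Set.Ioi 0 \ {yc}) ∧
    ∀ y ∈ Set.Ioi (0:ℝ) \ {yc},
      (- b y + (5/4) * y * deriv b y - a y * (deriv b y) ^ 2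
          + (if y < yc then (1:ℝ) else 0) = 1) ∧
      (- (5/4) * y * deriv a y + (1/2) * a y - 2 * lam ^ 2 * (deriv b y) ^ 2
          + 2 * a y * deriv b y * deriv a y = 0) := by
  open SortingFront in
  subst hyc
  obtain rfl : a = profileA lam := funext ha
  obtain rfl : b = profileB lam := funext hb
  refine ⟨(continuous_profileA hlam).continuousOn, (continuous_profileB hlam).continuousOn,
    fun y hy => (contDiffAt_profileA (ne_of_gt hy.1) hy.2).contDiffWithinAt,
    fun y hy => (contDiffAt_profileB (ne_of_gt hy.1) hy.2).contDiffWithinAt, ?_⟩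
  rintro y ⟨hy, hyc⟩
  rcases (show y ≠ _ from hyc).lt_or_gt with h | h
  · exact solvesFrontSystemAt_of_lt (ne_of_gt hy) h
  · exact solvesFrontSystemAt_of_gt hlam h
end

section
/- For y < y_c, the shifted polynomial is P(X) = (K₋⁵/(25λ⁴))·X·(X−1)², where K₋ = λ^{4/5}·6^{1/5}; in particular P does not depend on y and P(0) = 0. -/
/-!
Since `a = K₋ y^{2/5}`, Euler's relation `y a' = (2/5) a` makes the three terms of `g` that are
at most quadratic in `η` cancel (this needs `α · 2/5 = β = 1/2`), so only the term
`η a'² (η - a)² / (4λ⁴) = (a⁵ / y²) / (25 λ⁴) · (η/a) (η/a - 1)²` survives, and `a⁵ / y² = K₋⁵`.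
-/

lemma deriv_const_mul_rpow {K p y : ℝ} (hy : 0 < y) :
    deriv (fun x : ℝ => K * x ^ p) y = p * (K * y ^ p) / y := by
  rw [((Real.hasDerivAt_rpow_const (p := p) (Or.inl hy.ne')).const_mul K).deriv,
    Real.rpow_sub_one hy.ne']
  field_simp

lemma rpow_two_fifths_pow_five {y : ℝ} (hy : 0 ≤ y) : (y ^ ((2:ℝ)/5)) ^ 5 = y ^ 2 := by
  rw [← Real.rpow_natCast, ← Real.rpow_mul hy]
  norm_num

lemma cubic_profile_identity {lam y A η : ℝ} (hlam : lam ≠ 0) (hy : y ≠ 0) (hA : A ≠ 0) :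
    - 0 - (η - A) ^ 2 / (4 * lam ^ 2)
        + (5/4) * y * (0 - (2/5) * A / y * (η - A) / (2 * lam ^ 2))
        + (1/2) * η * (η - A) / (2 * lam ^ 2)
        - η * (0 - (2/5) * A / y * (η - A) / (2 * lam ^ 2)) ^ 2
        + 1
      = 1 - (A ^ 5 / y ^ 2 / (25 * lam ^ 4)) * (η / A) * (η / A - 1) ^ 2 := by
  field_simp
  ring

theorem stmt_6_general (lam : ℝ) (hlam : 0 < lam)
    (yc Km : ℝ)
    (hKm : Km = lam ^ ((4:ℝ)/5) * (6:ℝ) ^ ((1:ℝ)/5))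
    (a b : ℝ → ℝ)
    (ha : ∀ y : ℝ, a y = Km * y ^ ((2:ℝ)/5))
    (hb : ∀ y : ℝ, b y = 0)
    (g : ℝ → ℝ → ℝ)
    (hg : ∀ y η : ℝ, g y η =
      - b y - (η - a y) ^ 2 / (4 * lam ^ 2)
        + (5/4) * y * (deriv b y - deriv a y * (η - a y) / (2 * lam ^ 2))
        + (1/2) * η * (η - a y) / (2 * lam ^ 2)
        - η * (deriv b y - deriv a y * (η - a y) / (2 * lam ^ 2)) ^ 2
        + 1) :
    ∀ y : ℝ, 0 < y → y < yc → ∀ η : ℝ,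
      g y η = 1 - (Km ^ 5 / (25 * lam ^ 4)) * (η / a y) * (η / a y - 1) ^ 2 := by
  intro y hy _ η
  have hKm_pos : 0 < Km := hKm ▸ by positivity
  have ha_pos : 0 < a y := ha y ▸ mul_pos hKm_pos (Real.rpow_pos_of_pos hy _)
  have hderiv_b : deriv b y = 0 := by simp [show b = fun _ => 0 from funext hb]
  have hderiv_a : deriv a y = (2/5) * a y / y := by
    rw [show a = fun x => Km * x ^ ((2:ℝ)/5) from funext ha, deriv_const_mul_rpow hy]
  have hKm_pow : Km ^ 5 = a y ^ 5 / y ^ 2 := by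
    rw [ha, mul_pow, rpow_two_fifths_pow_five hy.le]
    field_simp
  rw [hg, hderiv_b, hderiv_a, hb, hKm_pow]
  exact cubic_profile_identity hlam.ne' hy.ne' ha_pos.ne'

theorem stmt_6 (lam : ℝ) (hlam : 0 < lam)
    (yc Km : ℝ) (hyc : yc = 4 * Real.sqrt (lam / 3))
    (hKm : Km = lam ^ ((4:ℝ)/5) * (6:ℝ) ^ ((1:ℝ)/5))
    (a b : ℝ → ℝ)
    (ha : ∀ y : ℝ, a y = Km * y ^ ((2:ℝ)/5))
    (hb : ∀ y : ℝ, b y = 0)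
    (g : ℝ → ℝ → ℝ)
    (hg : ∀ y η : ℝ, g y η =
      - b y - (η - a y) ^ 2 / (4 * lam ^ 2)
        + (5/4) * y * (deriv b y - deriv a y * (η - a y) / (2 * lam ^ 2))
        + (1/2) * η * (η - a y) / (2 * lam ^ 2)
        - η * (deriv b y - deriv a y * (η - a y) / (2 * lam ^ 2)) ^ 2
        + 1) :
    ∀ y : ℝ, 0 < y → y < yc → ∀ η : ℝ,
      g y η = 1 - (Km ^ 5 / (25 * lam ^ 4)) * (η / a y) * (η / a y - 1) ^ 2 :=
  stmt_6_general lam hlam yc Km hKm a b ha hb g hg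
end

section
/- Let T : I → ℝ be twice continuously differentiable on an interval I containing a with T(a) = 0 and T′(a) = 0. Then for every η ∈ I, the series u(η) = Σ_{k=0}^∞ 2^k·T(a + (η−a)·2^{−k}) converges absolutely, and satisfies the bound |u(η)| ≤ ‖T″‖_{∞,[a,η]}·(η−a)². -/
/-!
Since `T a = T' a = 0` and `|T''| ≤ M` on `[a, η]`, the mean value inequality applied twice gives
`|T y| ≤ M (y - a)² / 2` there. At `y = a + (η - a) 2⁻ᵏ` the `k`-th term is therefore at most
`M (η - a)² / 2 / 2ᵏ`, and these bounds sum to `M (η - a)²`.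
-/

open Set

lemma abs_le_mul_sq_div_two_of_abs_deriv_le {s : Set ℝ} (hs : Convex ℝ s) {a y M : ℝ}
    (ha : a ∈ s) (hy : y ∈ s) {f f' : ℝ → ℝ} (hf : ∀ x ∈ s, HasDerivWithinAt f (f' x) s x)
    (hfa : f a = 0) (hf'_le : ∀ x ∈ s, |f' x| ≤ M * |x - a|) :
    |f y| ≤ M * (y - a) ^ 2 / 2 := by
  -- Pull back to `[0, 1]` along `t ↦ a + t (y - a)`, so that both orientations of `a, y` are covered.
  set φ : ℝ → ℝ := fun t => a + t * (y - a)
  have hφs : ∀ t ∈ Icc (0 : ℝ) 1, φ t ∈ s := fun t ht => hs.add_smul_sub_mem ha hy ht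
  have hφ' : ∀ t, HasDerivAt φ (y - a) t := fun t =>
    (((hasDerivAt_id t).mul_const (y - a)).const_add a).congr_deriv (one_mul _)
  have hg : ∀ t ∈ Icc (0 : ℝ) 1,
      HasDerivWithinAt (f ∘ φ) (f' (φ t) * (y - a)) (Icc 0 1) t := fun t ht =>
    (hf _ (hφs t ht)).comp t (hφ' t).hasDerivWithinAt hφs
  have hB : ∀ t, HasDerivAt (fun t => M * (y - a) ^ 2 * t ^ 2 / 2) (M * (y - a) ^ 2 * t) t :=
    fun t => (((hasDerivAt_pow 2 t).const_mul (M * (y - a) ^ 2)).div_const 2).congr_deriv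
      (by ring)
  have hbound : ∀ t ∈ Ico (0 : ℝ) 1, ‖f' (φ t) * (y - a)‖ ≤ M * (y - a) ^ 2 * t := by
    intro t ht
    have hφa : |φ t - a| = t * |y - a| := by simp [φ, abs_mul, abs_of_nonneg ht.1]
    calc ‖f' (φ t) * (y - a)‖ = |f' (φ t)| * |y - a| := by rw [Real.norm_eq_abs, abs_mul]
      _ ≤ M * |φ t - a| * |y - a| := by gcongr; exact hf'_le _ (hφs t (Ico_subset_Icc_self ht))
      _ = M * (y - a) ^ 2 * t := by rw [hφa, ← sq_abs (y - a)]; ring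
  have := image_norm_le_of_norm_deriv_right_le_deriv_boundary
    (fun t ht => (hg t ht).continuousWithinAt)
    (fun t ht => (hg t (Ico_subset_Icc_self ht)).mono_of_mem_nhdsWithin (Icc_mem_nhdsGE_of_mem ht))
    (by simp [φ, hfa]) hB hbound (right_mem_Icc.2 zero_le_one)
  simpa [φ] using this

lemma abs_le_mul_sq_div_two_of_abs_deriv2_le {s : Set ℝ} (hs : Convex ℝ s) {a y M : ℝ}
    (ha : a ∈ s) (hy : y ∈ s) {f f' f'' : ℝ → ℝ}
    (hf : ∀ x ∈ s, HasDerivWithinAt f (f' x) s x) (hf' : ∀ x ∈ s, HasDerivWithinAt f' (f'' x) s x)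
    (hfa : f a = 0) (hf'a : f' a = 0) (hf''_le : ∀ x ∈ s, |f'' x| ≤ M) :
    |f y| ≤ M * (y - a) ^ 2 / 2 := by
  refine abs_le_mul_sq_div_two_of_abs_deriv_le hs ha hy hf hfa fun x hx => ?_
  simpa [hf'a, Real.norm_eq_abs] using
    hs.norm_image_sub_le_of_norm_hasDerivWithin_le hf' (by simpa using hf''_le) ha hx

lemma summable_abs_of_abs_le_geometric_two {u : ℕ → ℝ} {C : ℝ} (hu : ∀ k, |u k| ≤ C / 2 / 2 ^ k) :
    Summable fun k => |u k| :=
  (summable_geometric_two' C).of_nonneg_of_le (fun _ => abs_nonneg _) hu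

lemma abs_tsum_le_of_abs_le_geometric_two {u : ℕ → ℝ} {C : ℝ} (hu : ∀ k, |u k| ≤ C / 2 / 2 ^ k) :
    |∑' k, u k| ≤ C :=
  tsum_of_norm_bounded (f := u) (hasSum_geometric_two' C) hu

lemma add_sub_mul_two_zpow_neg_mem_uIcc (a b : ℝ) (k : ℕ) :
    a + (b - a) * (2 : ℝ) ^ (-(k : ℤ)) ∈ uIcc a b := by
  have h : (2 : ℝ) ^ (-(k : ℤ)) ∈ Icc 0 1 :=
    ⟨by positivity, zpow_le_one_of_nonpos₀ one_le_two (by simp)⟩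
  rw [mul_comm]
  exact (convex_uIcc a b).add_smul_sub_mem left_mem_uIcc right_mem_uIcc h

theorem stmt_10 (I : Set ℝ) (hI : Convex ℝ I) (a : ℝ) (ha : a ∈ I)
    (T T' T'' : ℝ → ℝ)
    (hT' : ∀ x ∈ I, HasDerivWithinAt T (T' x) I x)
    (hT'' : ∀ x ∈ I, HasDerivWithinAt T' (T'' x) I x)
    (hT''c : ContinuousOn T'' I)
    (hTa : T a = 0) (hT'a : T' a = 0) :
    ∀ η ∈ I,
      Summable (fun k : ℕ => |(2:ℝ) ^ k * T (a + (η - a) * (2:ℝ) ^ (-(k:ℤ)))|) ∧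
      |∑' k : ℕ, (2:ℝ) ^ k * T (a + (η - a) * (2:ℝ) ^ (-(k:ℤ)))|
        ≤ sSup ((fun x => |T'' x|) '' Set.uIcc a η) * (η - a) ^ 2 := by
  intro η hη
  set M := sSup ((fun x => |T'' x|) '' uIcc a η)
  have hsub : uIcc a η ⊆ I := hI.ordConnected.uIcc_subset ha hη
  have hM : ∀ x ∈ uIcc a η, |T'' x| ≤ M := fun x hx =>
    le_csSup (isCompact_uIcc.image_of_continuousOn (hT''c.mono hsub).abs).bddAbove ⟨x, hx, rfl⟩
  have hTaylor : ∀ y ∈ uIcc a η, |T y| ≤ M * (y - a) ^ 2 / 2 := fun y hy =>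
    abs_le_mul_sq_div_two_of_abs_deriv2_le (convex_uIcc a η) left_mem_uIcc hy
      (fun x hx => (hT' x (hsub hx)).mono hsub) (fun x hx => (hT'' x (hsub hx)).mono hsub)
      hTa hT'a hM
  have hterm : ∀ k : ℕ, |(2:ℝ) ^ k * T (a + (η - a) * (2:ℝ) ^ (-(k:ℤ)))|
      ≤ M * (η - a) ^ 2 / 2 / 2 ^ k := by
    intro k
    calc |(2:ℝ) ^ k * T (a + (η - a) * (2:ℝ) ^ (-(k:ℤ)))|
        ≤ 2 ^ k * (M * ((η - a) * (2:ℝ) ^ (-(k:ℤ))) ^ 2 / 2) := by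
          rw [abs_mul, abs_of_pos (by positivity)]
          gcongr
          simpa using hTaylor _ (add_sub_mul_two_zpow_neg_mem_uIcc a η k)
      _ = M * (η - a) ^ 2 / 2 / 2 ^ k := by
          rw [zpow_neg, zpow_natCast]; field_simp
  exact ⟨summable_abs_of_abs_le_geometric_two hterm, abs_tsum_le_of_abs_le_geometric_two hterm⟩
end

section
/- Uniform bound behind the front: with F(x) = log(1 − P(x)) for P(X) = γX(X−1)², fix a closed interval J₀ centered at 1 on which P < 1, and let J ⊆ J₀ be an open interval centered at 1 of length |J|. For any a > 0 and any η ∈ a·J, defining T(η) = F(η/a), the series Σ_{k≥0} |2^k·T(a + (η−a)2^{−k})| converges and is bounded by |J|²·‖F″‖_{∞,J₀}, uniformly in a and η. -/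
/-!
Since `P(1) = P'(1) = 0`, the function `F = log (1 - P)` vanishes to second order at `1`, so two
applications of the mean value theorem give `|F(1 + t)| ≤ M t²` with `M = sup_{J₀} |F''|`.
Writing `η / a = 1 + δ`, the `k`-th term of the series is `2ᵏ |F(1 + δ 2⁻ᵏ)| ≤ M δ² 2⁻ᵏ`, and the
geometric series sums to `2 M δ² ≤ |J|² M`.
-/

open Set

theorem Convex.abs_le_mul_sq_of_hasDerivWithinAt {f f' f'' : ℝ → ℝ} {s : Set ℝ}
    (hs : Convex ℝ s) {M x₀ x : ℝ} (hf : ∀ y ∈ s, HasDerivWithinAt f (f' y) s y)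
    (hf' : ∀ y ∈ s, HasDerivWithinAt f' (f'' y) s y) (hM : ∀ y ∈ s, |f'' y| ≤ M)
    (hx₀ : x₀ ∈ s) (hx : x ∈ s) (h0 : f x₀ = 0) (h1 : f' x₀ = 0) :
    |f x| ≤ M * (x - x₀) ^ 2 := by
  have hM0 : 0 ≤ M := (abs_nonneg _).trans (hM x₀ hx₀)
  have hf'_le : ∀ y ∈ s, |f' y| ≤ M * |y - x₀| := fun y hy => by
    simpa [h1] using hs.norm_image_sub_le_of_norm_hasDerivWithin_le hf' hM hx₀ hy
  have hseg : uIcc x₀ x ⊆ s := segment_eq_uIcc x₀ x ▸ hs.segment_subset hx₀ hx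
  have key := (convex_uIcc x₀ x).norm_image_sub_le_of_norm_hasDerivWithin_le
    (fun y hy => (hf y (hseg hy)).mono hseg)
    (fun y hy => (hf'_le y (hseg hy)).trans
      (mul_le_mul_of_nonneg_left (abs_sub_left_of_mem_uIcc hy) hM0))
    left_mem_uIcc right_mem_uIcc
  simp only [Real.norm_eq_abs, h0, sub_zero] at key
  rwa [mul_assoc, abs_mul_abs_self, ← sq] at key

theorem abs_le_sSup_abs_deriv_deriv_mul_sq {f : ℝ → ℝ} {U : Set ℝ} (hU : IsOpen U)
    (hf : ContDiffOn ℝ 2 f U) {a b x₀ x : ℝ} (hab : Icc a b ⊆ U) (hx₀ : x₀ ∈ Icc a b)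
    (hx : x ∈ Icc a b) (h0 : f x₀ = 0) (h1 : deriv f x₀ = 0) :
    |f x| ≤ sSup ((fun y => |deriv (deriv f) y|) '' Icc a b) * (x - x₀) ^ 2 := by
  obtain ⟨hdf, -, hf'⟩ := (contDiffOn_succ_iff_deriv_of_isOpen (n := 1) hU).1 hf
  obtain ⟨hddf, -, hf''⟩ := (contDiffOn_succ_iff_deriv_of_isOpen (n := 0) hU).1 hf'
  have hbdd : BddAbove ((fun y => |deriv (deriv f) y|) '' Icc a b) :=
    (isCompact_Icc.image_of_continuousOn (hf''.continuousOn.mono hab).abs).bddAbove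
  have hasDeriv {g : ℝ → ℝ} (hg : DifferentiableOn ℝ g U) (y : ℝ) (hy : y ∈ Icc a b) :
      HasDerivWithinAt g (deriv g y) (Icc a b) y :=
    ((hg y (hab hy)).differentiableAt (hU.mem_nhds (hab hy))).hasDerivAt.hasDerivWithinAt
  exact (convex_Icc a b).abs_le_mul_sq_of_hasDerivWithinAt (hasDeriv hdf) (hasDeriv hddf)
    (fun y hy => le_csSup hbdd (mem_image_of_mem _ hy)) hx₀ hx h0 h1

theorem hasDerivAt_mul_sub_sq_self {g : ℝ → ℝ} {x₀ : ℝ} (hg : DifferentiableAt ℝ g x₀) :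
    HasDerivAt (fun x => g x * (x - x₀) ^ 2) 0 x₀ := by
  refine (hg.hasDerivAt.mul (((hasDerivAt_id' x₀).sub_const x₀).pow 2)).congr_deriv ?_
  simp

theorem contDiffOn_log_one_sub {P : ℝ → ℝ} {n : WithTop ℕ∞} (hP : ContDiff ℝ n P) :
    ContDiffOn ℝ n (fun x => Real.log (1 - P x)) {x | P x < 1} :=
  (contDiff_const.sub hP).contDiffOn.log fun _ hx => sub_ne_zero.2 (ne_of_gt hx)

theorem deriv_log_one_sub_eq_zero {P : ℝ → ℝ} {x : ℝ} (hP : HasDerivAt P 0 x) (hx : P x ≠ 1) :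
    deriv (fun y => Real.log (1 - P y)) x = 0 := by
  simpa using (((hasDerivAt_const x 1).sub hP).log (sub_ne_zero.2 hx.symm)).deriv

theorem summable_abs_two_pow_mul_and_tsum_le {g : ℝ → ℝ} {C δ : ℝ}
    (hg : ∀ t, |t| ≤ |δ| → |g t| ≤ C * t ^ 2) :
    Summable (fun k : ℕ => |(2:ℝ) ^ k * g (δ * (2:ℝ) ^ (-(k:ℤ)))|) ∧
      ∑' k : ℕ, |(2:ℝ) ^ k * g (δ * (2:ℝ) ^ (-(k:ℤ)))| ≤ 2 * C * δ ^ 2 := by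
  have hterm (k : ℕ) : |(2:ℝ) ^ k * g (δ * (2:ℝ) ^ (-(k:ℤ)))| ≤ C * δ ^ 2 * (1 / 2) ^ k := by
    have hw : (2:ℝ) ^ (-(k:ℤ)) = (1 / 2) ^ k := by rw [zpow_neg, zpow_natCast, one_div, inv_pow]
    have hsmall : |δ * (1 / 2 : ℝ) ^ k| ≤ |δ| := by
      rw [abs_mul, abs_of_nonneg (by positivity : (0:ℝ) ≤ (1 / 2) ^ k)]
      exact mul_le_of_le_one_right (abs_nonneg δ)
        (pow_le_one₀ (by norm_num) (by norm_num : (1 / 2 : ℝ) ≤ 1))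
    rw [hw, abs_mul, abs_of_pos (by positivity)]
    calc (2:ℝ) ^ k * |g (δ * (1 / 2) ^ k)| ≤ 2 ^ k * (C * (δ * (1 / 2) ^ k) ^ 2) :=
          mul_le_mul_of_nonneg_left (hg _ hsmall) (by positivity)
      _ = C * δ ^ 2 * (1 / 2) ^ k * ((2:ℝ) ^ k * (1 / 2) ^ k) := by ring
      _ = C * δ ^ 2 * (1 / 2) ^ k := by rw [← mul_pow]; norm_num
  have hgeom := summable_geometric_two.mul_left (C * δ ^ 2)
  have hsum := Summable.of_nonneg_of_le (fun k => abs_nonneg _) hterm hgeom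
  refine ⟨hsum, (hsum.tsum_le_tsum hterm hgeom).trans_eq ?_⟩
  rw [tsum_mul_left, tsum_geometric_two]
  ring

theorem stmt_13_general (γ : ℝ)
    (P F : ℝ → ℝ)
    (hP : ∀ x : ℝ, P x = γ * x * (x - 1) ^ 2)
    (hF : ∀ x : ℝ, F x = Real.log (1 - P x))
    (r₀ r : ℝ) (hrr₀ : r ≤ r₀)
    (hP1 : ∀ x ∈ Set.Icc (1 - r₀) (1 + r₀), P x < 1)
    (a : ℝ) (haa : 0 < a) (η : ℝ) (hη : η / a ∈ Set.Ioo (1 - r) (1 + r))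
    (T : ℝ → ℝ) (hT : ∀ x : ℝ, T x = F (x / a)) :
    Summable (fun k : ℕ => |(2:ℝ) ^ k * T (a + (η - a) * (2:ℝ) ^ (-(k:ℤ)))|) ∧
    (∑' k : ℕ, |(2:ℝ) ^ k * T (a + (η - a) * (2:ℝ) ^ (-(k:ℤ)))|)
      ≤ (2 * r) ^ 2 * sSup ((fun x => |deriv (deriv F) x|) '' Set.Icc (1 - r₀) (1 + r₀)) := by
  have hP_eq : P = fun x => γ * x * (x - 1) ^ 2 := funext hP
  have hP_smooth : ContDiff ℝ 2 P := by rw [hP_eq]; fun_prop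
  have hP_one : P 1 = 0 := by simp [hP]
  have hP_deriv_one : HasDerivAt P 0 1 := by
    rw [hP_eq]; exact hasDerivAt_mul_sub_sq_self (g := fun x => γ * x) (by fun_prop)
  have hF_eq : F = fun x => Real.log (1 - P x) := funext hF
  set M := sSup ((fun x => |deriv (deriv F) x|) '' Icc (1 - r₀) (1 + r₀))
  set δ := η / a - 1 with hδ
  have hδr : |δ| < r := abs_sub_lt_iff.2 ⟨by linarith [hη.2], by linarith [hη.1]⟩
  have hball (t : ℝ) (ht : |t| ≤ |δ|) : 1 + t ∈ Icc (1 - r₀) (1 + r₀) := by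
    have := abs_le.1 (ht.trans (hδr.le.trans hrr₀))
    constructor <;> linarith
  have hF_sq (t : ℝ) (ht : |t| ≤ |δ|) : |F (1 + t)| ≤ M * t ^ 2 := by
    have h := abs_le_sSup_abs_deriv_deriv_mul_sq (isOpen_lt hP_smooth.continuous continuous_const)
      (hF_eq ▸ contDiffOn_log_one_sub hP_smooth) hP1 (by simpa using hball 0 (by simp))
      (hball t ht) (by simp [hF, hP_one])
      (hF_eq ▸ deriv_log_one_sub_eq_zero hP_deriv_one (by simp [hP_one]))
    rwa [add_sub_cancel_left] at h
  have hT_eq (k : ℕ) :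
      T (a + (η - a) * (2:ℝ) ^ (-(k:ℤ))) = F (1 + δ * (2:ℝ) ^ (-(k:ℤ))) := by
    rw [hT, hδ]; congr 3; field_simp
  obtain ⟨hsum, hle⟩ := summable_abs_two_pow_mul_and_tsum_le hF_sq
  simp only [hT_eq]
  refine ⟨hsum, hle.trans ?_⟩
  have hM : 0 ≤ M := Real.sSup_nonneg (by rintro _ ⟨x, -, rfl⟩; exact abs_nonneg _)
  have hδ_sq : δ ^ 2 ≤ r ^ 2 :=
    sq_le_sq' (by linarith [neg_abs_le δ]) (by linarith [le_abs_self δ])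
  nlinarith

theorem stmt_13 (γ : ℝ) (hγ : 0 < γ)
    (P F : ℝ → ℝ)
    (hP : ∀ x : ℝ, P x = γ * x * (x - 1) ^ 2)
    (hF : ∀ x : ℝ, F x = Real.log (1 - P x))
    (r₀ r : ℝ) (hr₀ : 0 < r₀) (hr : 0 < r) (hrr₀ : r ≤ r₀)
    (hP1 : ∀ x ∈ Set.Icc (1 - r₀) (1 + r₀), P x < 1)
    (a : ℝ) (haa : 0 < a) (η : ℝ) (hη : η / a ∈ Set.Ioo (1 - r) (1 + r))
    (T : ℝ → ℝ) (hT : ∀ x : ℝ, T x = F (x / a)) :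
    Summable (fun k : ℕ => |(2:ℝ) ^ k * T (a + (η - a) * (2:ℝ) ^ (-(k:ℤ)))|) ∧
    (∑' k : ℕ, |(2:ℝ) ^ k * T (a + (η - a) * (2:ℝ) ^ (-(k:ℤ)))|)
      ≤ (2 * r) ^ 2 * sSup ((fun x => |deriv (deriv F) x|) '' Set.Icc (1 - r₀) (1 + r₀)) :=
  stmt_13_general γ P F hP hF r₀ r hrr₀ hP1 a haa η hη T hT
end

section
/- Two-dimensional Gaussian limit: let u₁ : ℝ → ℝ be continuous and bounded, η̄ > 0, λ > 0, η ∈ ℝ. Then as ε → 0⁺, (1/(2πλ²))·∬_{(1−η̄/ε,∞)²} exp(−z₁z₂/(4λ²) − 3(z₁²+z₂²)/(8λ²))·exp(u₁(η) − u₁(η̄+εz₁) − u₁(η̄+εz₂)) dz₁dz₂ converges to √2·exp(u₁(η) − 2u₁(η̄)). -/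
/-!
The kernel is `exp (-q)` for the positive definite form
`q z = (3 z₁² + 2 z₁ z₂ + 3 z₂²) / (8 λ²)`; completing the square,
`∬ exp (-(a z₁² + b z₁ z₂ + c z₂²)) = 2 π / √(4 a c - b²)`, which here is `2 π λ² √2`.
The second factor is bounded by `exp (u₁ η + 2 M)` and tends pointwise to
`exp (u₁ η - 2 u₁ η̄)` by continuity, while the domains `(1 - η̄/ε, ∞)²` exhaust the plane,
so dominated convergence gives the limit.
-/

open Real Filter MeasureTheory Topology Set

section GaussianQuadraticForm

variable {a b c : ℝ}

lemma exp_neg_quadratic_eq_mul (hc : c ≠ 0) (x y : ℝ) :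
    exp (-(a * x ^ 2 + b * x * y + c * y ^ 2))
      = exp (-((4 * a * c - b ^ 2) / (4 * c)) * x ^ 2) * exp (-c * (y + b * x / (2 * c)) ^ 2) := by
  rw [← exp_add]
  congr 1
  field_simp
  ring

lemma integrable_exp_neg_quadratic_slice (hc : 0 < c) (x : ℝ) :
    Integrable (fun y => exp (-(a * x ^ 2 + b * x * y + c * y ^ 2))) := by
  simp_rw [exp_neg_quadratic_eq_mul hc.ne']
  exact ((integrable_exp_neg_mul_sq hc).comp_add_right _).const_mul _

lemma integral_exp_neg_quadratic_slice (hc : 0 < c) (x : ℝ) :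
    ∫ y, exp (-(a * x ^ 2 + b * x * y + c * y ^ 2))
      = exp (-((4 * a * c - b ^ 2) / (4 * c)) * x ^ 2) * √(π / c) := by
  simp_rw [exp_neg_quadratic_eq_mul hc.ne']
  rw [integral_const_mul, integral_add_right_eq_self (fun y => exp (-c * y ^ 2)), integral_gaussian]

lemma integrable_exp_neg_quadratic (hc : 0 < c) (hdisc : b ^ 2 < 4 * a * c) :
    Integrable (fun p : ℝ × ℝ => exp (-(a * p.1 ^ 2 + b * p.1 * p.2 + c * p.2 ^ 2))) := by
  have hd : 0 < (4 * a * c - b ^ 2) / (4 * c) := div_pos (by linarith) (by positivity)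
  rw [Measure.volume_eq_prod, integrable_prod_iff (by fun_prop)]
  refine ⟨.of_forall (integrable_exp_neg_quadratic_slice hc), ?_⟩
  simp_rw [norm_of_nonneg (exp_pos _).le, integral_exp_neg_quadratic_slice hc]
  exact (integrable_exp_neg_mul_sq hd).mul_const _

lemma integral_exp_neg_quadratic (hc : 0 < c) (hdisc : b ^ 2 < 4 * a * c) :
    ∫ p : ℝ × ℝ, exp (-(a * p.1 ^ 2 + b * p.1 * p.2 + c * p.2 ^ 2))
      = 2 * π / √(4 * a * c - b ^ 2) := by
  have hD : 0 < 4 * a * c - b ^ 2 := by linarith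
  have hint := integrable_exp_neg_quadratic hc hdisc
  rw [Measure.volume_eq_prod] at hint ⊢
  rw [integral_prod _ hint]
  simp_rw [integral_exp_neg_quadratic_slice hc]
  rw [integral_mul_const, integral_gaussian, ← sqrt_mul (by positivity),
    show π / ((4 * a * c - b ^ 2) / (4 * c)) * (π / c) = (2 * π) ^ 2 / (4 * a * c - b ^ 2) by
      field_simp; ring,
    sqrt_div' _ hD.le, sqrt_sq (by positivity)]

end GaussianQuadraticForm

theorem tendsto_setIntegral_mul_of_dominated {ι α : Type*} [MeasurableSpace α] {μ : Measure α}
    {l : Filter ι} [l.IsCountablyGenerated] {g f : α → ℝ} {F : ι → α → ℝ} {s : ι → Set α}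
    {C : ℝ} (hg : Integrable g μ) (hs : ∀ i, MeasurableSet (s i))
    (hs_cover : ∀ᵐ x ∂μ, ∀ᶠ i in l, x ∈ s i)
    (hF_meas : ∀ᶠ i in l, AEStronglyMeasurable (F i) μ)
    (hF_bound : ∀ᶠ i in l, ∀ᵐ x ∂μ, ‖F i x‖ ≤ C)
    (hF_lim : ∀ᵐ x ∂μ, Tendsto (fun i => F i x) l (𝓝 (f x))) :
    Tendsto (fun i => ∫ x in s i, g x * F i x ∂μ) l (𝓝 (∫ x, g x * f x ∂μ)) := by
  simp_rw [← integral_indicator (hs _)]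
  refine tendsto_integral_filter_of_dominated_convergence (fun x => ‖g x‖ * C) ?_ ?_
    (hg.norm.mul_const C) ?_
  · filter_upwards [hF_meas] with i hi
    exact (hg.aestronglyMeasurable.mul hi).indicator (hs i)
  · filter_upwards [hF_bound] with i hi
    filter_upwards [hi] with x hx
    refine (norm_indicator_le_norm_self _ x).trans ?_
    rw [norm_mul]
    exact mul_le_mul_of_nonneg_left hx (norm_nonneg _)
  · filter_upwards [hs_cover, hF_lim] with x hx hlim
    refine (hlim.const_mul (g x)).congr' ?_
    filter_upwards [hx] with i hi
    exact (indicator_of_mem hi (fun x => g x * F i x)).symm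

lemma eventually_mem_Ioi_prod_Ioi {ι : Type*} {l : Filter ι} {a : ι → ℝ}
    (ha : Tendsto a l atBot) (p : ℝ × ℝ) : ∀ᶠ i in l, p ∈ Ioi (a i) ×ˢ Ioi (a i) :=
  (ha.eventually (eventually_lt_atBot p.1)).and (ha.eventually (eventually_lt_atBot p.2))

lemma tendsto_one_sub_div_nhdsGT_zero_atBot {r : ℝ} (hr : 0 < r) :
    Tendsto (fun ε : ℝ => 1 - r / ε) (𝓝[>] 0) atBot := by
  have : Tendsto (fun ε : ℝ => r / ε) (𝓝[>] 0) atTop := by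
    simpa [div_eq_mul_inv] using tendsto_inv_nhdsGT_zero.const_mul_atTop hr
  exact tendsto_atBot_add_const_left _ 1 (tendsto_neg_atTop_atBot.comp this)

section Kernel

variable {lam : ℝ}

lemma exp_kernel_eq_exp_neg_quadratic (lam : ℝ) :
    (fun p : ℝ × ℝ => exp (-(p.1 * p.2) / (4 * lam ^ 2) - 3 * (p.1 ^ 2 + p.2 ^ 2) / (8 * lam ^ 2)))
      = fun p => exp (-(3 / (8 * lam ^ 2) * p.1 ^ 2 + 1 / (4 * lam ^ 2) * p.1 * p.2
          + 3 / (8 * lam ^ 2) * p.2 ^ 2)) := by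
  ext p
  congr 1
  field_simp
  ring

lemma kernel_discriminant_eq (hlam : lam ≠ 0) :
    4 * (3 / (8 * lam ^ 2)) * (3 / (8 * lam ^ 2)) - (1 / (4 * lam ^ 2)) ^ 2
      = (1 / (lam ^ 2 * √2)) ^ 2 := by
  field_simp
  rw [sq_sqrt zero_le_two]
  ring

lemma kernel_discriminant_pos (hlam : lam ≠ 0) :
    (1 / (4 * lam ^ 2)) ^ 2 < 4 * (3 / (8 * lam ^ 2)) * (3 / (8 * lam ^ 2)) := by
  have := kernel_discriminant_eq hlam
  have : 0 < (1 / (lam ^ 2 * √2)) ^ 2 := by positivity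
  linarith

lemma integrable_exp_kernel (hlam : lam ≠ 0) :
    Integrable (fun p : ℝ × ℝ =>
      exp (-(p.1 * p.2) / (4 * lam ^ 2) - 3 * (p.1 ^ 2 + p.2 ^ 2) / (8 * lam ^ 2))) := by
  rw [exp_kernel_eq_exp_neg_quadratic]
  exact integrable_exp_neg_quadratic (by positivity) (kernel_discriminant_pos hlam)

lemma integral_exp_kernel (hlam : lam ≠ 0) :
    ∫ p : ℝ × ℝ, exp (-(p.1 * p.2) / (4 * lam ^ 2) - 3 * (p.1 ^ 2 + p.2 ^ 2) / (8 * lam ^ 2))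
      = 2 * π * lam ^ 2 * √2 := by
  rw [exp_kernel_eq_exp_neg_quadratic, integral_exp_neg_quadratic (by positivity)
    (kernel_discriminant_pos hlam), kernel_discriminant_eq hlam, sqrt_sq (by positivity)]
  field_simp

end Kernel

theorem stmt_17 (u₁ : ℝ → ℝ) (hc : Continuous u₁) (hbd : ∃ M : ℝ, ∀ x : ℝ, |u₁ x| ≤ M)
    (etaBar lam η : ℝ) (hetaBar : 0 < etaBar) (hlam : 0 < lam) :
    Tendsto (fun ε : ℝ =>
        (1 / (2 * Real.pi * lam ^ 2)) *
          ∫ p in (Set.Ioi (1 - etaBar / ε)) ×ˢ (Set.Ioi (1 - etaBar / ε)),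
            Real.exp (-(p.1 * p.2) / (4 * lam ^ 2) - 3 * (p.1 ^ 2 + p.2 ^ 2) / (8 * lam ^ 2)) *
              Real.exp (u₁ η - u₁ (etaBar + ε * p.1) - u₁ (etaBar + ε * p.2)))
      (nhdsWithin 0 (Set.Ioi 0))
      (nhds (Real.sqrt 2 * Real.exp (u₁ η - 2 * u₁ etaBar))) := by
  obtain ⟨M, hM⟩ := hbd
  have hweight_le (ε : ℝ) (p : ℝ × ℝ) :
      ‖exp (u₁ η - u₁ (etaBar + ε * p.1) - u₁ (etaBar + ε * p.2))‖ ≤ exp (u₁ η + 2 * M) := by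
    rw [norm_of_nonneg (exp_pos _).le, exp_le_exp]
    linarith [(abs_le.1 (hM (etaBar + ε * p.1))).1, (abs_le.1 (hM (etaBar + ε * p.2))).1]
  have hweight_lim (p : ℝ × ℝ) : Tendsto (fun ε => exp (u₁ η - u₁ (etaBar + ε * p.1)
      - u₁ (etaBar + ε * p.2))) (𝓝[>] 0) (𝓝 (exp (u₁ η - 2 * u₁ etaBar))) := by
    refine tendsto_nhdsWithin_of_tendsto_nhds ?_
    convert (Continuous.tendsto (by fun_prop) 0 : Tendsto
      (fun ε : ℝ => exp (u₁ η - u₁ (etaBar + ε * p.1) - u₁ (etaBar + ε * p.2))) _ _) using 3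
    simp only [zero_mul, add_zero]
    ring
  have hlim := tendsto_setIntegral_mul_of_dominated (integrable_exp_kernel hlam.ne')
    (fun _ => measurableSet_Ioi.prod measurableSet_Ioi)
    (.of_forall (eventually_mem_Ioi_prod_Ioi (tendsto_one_sub_div_nhdsGT_zero_atBot hetaBar)))
    (.of_forall fun _ => by fun_prop) (.of_forall fun ε => .of_forall (hweight_le ε))
    (.of_forall hweight_lim)
  rw [integral_mul_const, integral_exp_kernel hlam.ne'] at hlim
  convert hlim.const_mul (1 / (2 * π * lam ^ 2)) using 2
  field_simp
end
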